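/- In every standard dynamic Odintsov–Wansing model, the schema ⟨α*⟩φ → (φ ∨ ⟨α*⟩(¬φ ∧ ⟨α⟩φ)) is valid. -/

import Mathlib

mutual
inductive DynProg : Type where
  | atom : ℕ → DynProg
  | seq : DynProg → DynProg → DynProg
  | union : DynProg → DynProg → DynProg
  | star : DynProg → DynProg
  | test : DynForm → DynProg
inductive DynForm : Type where
  | atom : ℕ → DynForm
  | bot  : DynForm
  | snot : DynForm → DynForm
  | and  : DynForm → DynForm → DynForm
  | or   : DynForm → DynForm → DynForm
  | imp  : DynForm → DynForm → DynForm
  | box  : DynProg → DynForm → DynForm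
  | dia  : DynProg → DynForm → DynForm
end

def DynForm.neg (φ : DynForm) : DynForm := .imp φ .bot

def DynForm.biimp (φ ψ : DynForm) : DynForm := .and (.imp φ ψ) (.imp ψ φ)

structure DynModel : Type 1 where
  S : Type
  ne : Nonempty S
  Ra : ℕ → S → S → Prop
  Vp : ℕ → S → Prop
  Vm : ℕ → S → Prop

mutual
def progRel (M : DynModel) : DynProg → M.S → M.S → Prop
  | .atom a, x, y => M.Ra a x y
  | .seq α β, x, z => ∃ y, progRel M α x y ∧ progRel M β y z
  | .union α β, x, y => progRel M α x y ∨ progRel M β x y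
  | .star α, x, y => Relation.ReflTransGen (fun u v => progRel M α u v) x y
  | .test φ, x, y => x = y ∧ dverify M x φ
def dverify (M : DynModel) : M.S → DynForm → Prop
  | x, .atom p => M.Vp p x
  | _, .bot => False
  | x, .snot φ => dfalsify M x φ
  | x, .and φ ψ => dverify M x φ ∧ dverify M x ψ
  | x, .or φ ψ => dverify M x φ ∨ dverify M x ψ
  | x, .imp φ ψ => dverify M x φ → dverify M x ψ
  | x, .box α φ => ∀ y, progRel M α x y → dverify M y φ
  | x, .dia α φ => ∃ y, progRel M α x y ∧ dverify M y φ
def dfalsify (M : DynModel) : M.S → DynForm → Prop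
  | x, .atom p => M.Vm p x
  | _, .bot => True
  | x, .snot φ => dverify M x φ
  | x, .and φ ψ => dfalsify M x φ ∨ dfalsify M x ψ
  | x, .or φ ψ => dfalsify M x φ ∧ dfalsify M x ψ
  | x, .imp φ ψ => dverify M x φ ∧ dfalsify M x ψ
  | x, .box α φ => ∃ y, progRel M α x y ∧ dfalsify M y φ
  | x, .dia α φ => ∀ y, progRel M α x y → dfalsify M y φ
end

def validIn (M : DynModel) (φ : DynForm) : Prop := ∀ x : M.S, dverify M x φ

def DynValid (φ : DynForm) : Prop := ∀ M : DynModel, validIn M φ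

theorem Relation.ReflTransGen.self_or_exists_entry {α : Type*} {r : α → α → Prop} {p : α → Prop}
    {a b : α} (h : Relation.ReflTransGen r a b) (hb : p b) :
    p a ∨ ∃ c d, Relation.ReflTransGen r a c ∧ ¬ p c ∧ r c d ∧ p d := by
  induction h using Relation.ReflTransGen.head_induction_on with
  | refl => exact .inl hb
  | @head a a' hstep _ ih =>
    by_cases ha : p a
    · exact .inl ha
    · right
      rcases ih with ha' | ⟨c, d, hc, hnc, hcd, hd⟩
      · exact ⟨a, a', .refl, ha, hstep, ha'⟩
      · exact ⟨c, d, hc.head hstep, hnc, hcd, hd⟩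

theorem dverify_neg (M : DynModel) (x : M.S) (φ : DynForm) :
    dverify M x φ.neg ↔ ¬ dverify M x φ := by
  simp [DynForm.neg, dverify]

theorem stmt13 (M : DynModel) (α : DynProg) (φ : DynForm) :
    validIn M (.imp (.dia (.star α) φ)
      (.or φ (.dia (.star α) (.and (DynForm.neg φ) (.dia α φ))))) := by
  rintro x ⟨y, hxy, hy⟩
  rcases hxy.self_or_exists_entry (p := (dverify M · φ)) hy with hx | ⟨z, w, hxz, hz, hzw, hw⟩
  · exact .inl hx
  · exact .inr ⟨z, hxz, (dverify_neg M z φ).mpr hz, w, hzw, hw⟩
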